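/- Let G be a finite connected non-vertex-transitive graph with no terminal orbit. Then every proper nonempty union of orbits of Aut(G) induces a disconnected subgraph of G. -/

import Mathlib

/-- The orbit of a vertex under the automorphism group of `G`. -/
def GraphOrbit {V : Type*} (G : SimpleGraph V) (v : V) : Set V :=
  {u | ∃ φ : G ≃g G, φ v = u}

/-- `O` is an orbit of `Aut(G)` on vertices. -/
def IsOrbit {V : Type*} (G : SimpleGraph V) (O : Set V) : Prop :=
  ∃ v, O = GraphOrbit G v

/-- `O` is a terminal orbit-candidate set: for every `u ∉ O` and `v ∈ O` there is a
`u`–`v` path meeting `O` only in `v`. -/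
def IsTerminalSet {V : Type*} (G : SimpleGraph V) (O : Set V) : Prop :=
  ∀ u ∉ O, ∀ v ∈ O, ∃ p : G.Walk u v, p.IsPath ∧ {x | x ∈ p.support} ∩ O = {v}

/-- `G` is vertex-transitive. -/
def IsVertexTransitive {V : Type*} (G : SimpleGraph V) : Prop :=
  ∀ u v : V, ∃ φ : G ≃g G, φ u = v


/-!
Suppose a proper nonempty union `A` of orbits induces a connected subgraph. Let `x₀` be a vertex
farthest from `A`; since `A` is invariant, automorphisms preserve the distance to `A`, so every
vertex of the orbit `O` of `x₀` lies at the maximal distance from `A`. For `u ∉ O` and `v ∈ O`,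
walk from `u` along a geodesic to `A` (all later vertices strictly closer to `A` than `u`), cross
`A` inside its connected induced subgraph, and climb a geodesic from `A` to `v` (all earlier
vertices strictly closer to `A` than `v`). This walk meets `O` only in `v`, so `O` is terminal.
-/

namespace SimpleGraph

variable {V V' : Type*} {G : SimpleGraph V} {G' : SimpleGraph V'}

lemma edist_map_le (f : G →g G') (u v : V) : G'.edist (f u) (f v) ≤ G.edist u v :=
  le_iInf fun w => by simpa using edist_le (w.map f)

lemma Iso.edist_map (φ : G ≃g G') (u v : V) : G'.edist (φ u) (φ v) = G.edist u v :=
  le_antisymm (edist_map_le φ.toHom u v) (by simpa using edist_map_le φ.symm.toHom (φ u) (φ v))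

lemma Iso.dist_map (φ : G ≃g G') (u v : V) : G'.dist (φ u) (φ v) = G.dist u v := by
  simp only [dist, Iso.edist_map]

lemma dist_lt_of_mem_support_of_length_eq_dist {x y a : V} (w : G.Walk x a)
    (hw : w.length = G.dist x a) (hy : y ∈ w.support) (hyx : y ≠ x) :
    G.dist y a < G.dist x a := by
  classical
  have hsplit := congrArg Walk.length (w.take_spec hy)
  rw [Walk.length_append] at hsplit
  have htake : (w.takeUntil y hy).length ≠ 0 := fun h =>
    hyx (Walk.eq_of_length_eq_zero h).symm
  have := dist_le (w.dropUntil y hy)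
  omega

lemma isTerminalSet_of_forall_exists_walk {O : Set V}
    (h : ∀ u ∉ O, ∀ v ∈ O, ∃ w : G.Walk u v, ∀ z ∈ w.support, z ∈ O → z = v) :
    IsTerminalSet G O := by
  classical
  intro u hu v hv
  obtain ⟨w, hw⟩ := h u hu v hv
  refine ⟨w.toPath, w.toPath.2, Set.eq_singleton_iff_unique_mem.mpr ⟨⟨?_, hv⟩, ?_⟩⟩
  · exact Walk.end_mem_support _
  · rintro z ⟨hz, hzO⟩
    exact hw z (Walk.support_toPath_subset_support w hz) hzO

lemma Connected.exists_walk_support_subset {A : Set V} (hA : (G.induce A).Connected) {a b : V}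
    (ha : a ∈ A) (hb : b ∈ A) : ∃ w : G.Walk a b, ∀ z ∈ w.support, z ∈ A := by
  obtain ⟨w⟩ := hA ⟨a, ha⟩ ⟨b, hb⟩
  refine ⟨w.map (Embedding.induce A).toHom, fun z hz => ?_⟩
  obtain ⟨z', -, rfl⟩ := List.mem_map.mp (Walk.support_map _ _ ▸ hz)
  exact z'.2

lemma graphOrbit_eq_of_mem {u v : V} (h : u ∈ GraphOrbit G v) :
    GraphOrbit G u = GraphOrbit G v := by
  obtain ⟨ψ, rfl⟩ := h
  ext x
  constructor
  · rintro ⟨φ, rfl⟩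
    exact ⟨ψ.trans φ, rfl⟩
  · rintro ⟨φ, rfl⟩
    exact ⟨ψ.symm.trans φ, by simp⟩

def IsAutInvariant (G : SimpleGraph V) (A : Set V) : Prop :=
  ∀ (φ : G ≃g G) (x : V), x ∈ A → φ x ∈ A

lemma isAutInvariant_sUnion_of_isOrbit {S : Set (Set V)} (hS : ∀ O ∈ S, IsOrbit G O) :
    IsAutInvariant G (⋃₀ S) := by
  rintro φ x ⟨O, hO, hxO⟩
  obtain ⟨v, rfl⟩ := hS O hO
  obtain ⟨ψ, rfl⟩ := hxO
  exact ⟨GraphOrbit G v, hO, ψ.trans φ, rfl⟩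

/-- Junk value `0` when `A` is empty. -/
noncomputable def infDist (G : SimpleGraph V) (A : Set V) (x : V) : ℕ :=
  sInf (G.dist x '' A)

variable {A : Set V}

lemma infDist_le_dist {x a : V} (ha : a ∈ A) : G.infDist A x ≤ G.dist x a :=
  Nat.sInf_le ⟨a, ha, rfl⟩

lemma exists_dist_eq_infDist (hA : A.Nonempty) (x : V) : ∃ a ∈ A, G.dist x a = G.infDist A x :=
  Nat.sInf_mem (hA.image _)

lemma infDist_eq_zero_iff (hconn : G.Connected) (hA : A.Nonempty) {x : V} :
    G.infDist A x = 0 ↔ x ∈ A := by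
  constructor
  · intro h
    obtain ⟨a, ha, hxa⟩ := exists_dist_eq_infDist hA x
    rwa [hconn.dist_eq_zero_iff.mp (hxa.trans h)]
  · intro hx
    simpa using infDist_le_dist (G := G) (x := x) hx

lemma IsAutInvariant.infDist_apply (hA : IsAutInvariant G A) (φ : G ≃g G) (x : V) :
    G.infDist A (φ x) = G.infDist A x := by
  suffices G.dist (φ x) '' A = G.dist x '' A by rw [infDist, infDist, this]
  ext n
  constructor
  · rintro ⟨a, ha, rfl⟩
    exact ⟨φ.symm a, hA φ.symm a ha, by simpa using (Iso.dist_map φ x (φ.symm a)).symm⟩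
  · rintro ⟨a, ha, rfl⟩
    exact ⟨φ a, hA φ a ha, Iso.dist_map φ x a⟩

lemma IsAutInvariant.infDist_eq_of_mem_graphOrbit (hA : IsAutInvariant G A) {x z : V}
    (hz : z ∈ GraphOrbit G x) : G.infDist A z = G.infDist A x := by
  obtain ⟨φ, rfl⟩ := hz
  exact hA.infDist_apply φ x

lemma exists_walk_to_set_infDist_lt (hconn : G.Connected) (hA : A.Nonempty) (x : V) :
    ∃ a ∈ A, ∃ w : G.Walk x a, ∀ y ∈ w.support, y ≠ x → G.infDist A y < G.infDist A x := by
  obtain ⟨a, ha, hxa⟩ := exists_dist_eq_infDist hA x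
  obtain ⟨w, hw⟩ := hconn.exists_walk_length_eq_dist x a
  refine ⟨a, ha, w, fun y hy hyx => ?_⟩
  calc G.infDist A y ≤ G.dist y a := infDist_le_dist ha
    _ < G.dist x a := dist_lt_of_mem_support_of_length_eq_dist w hw hy hyx
    _ = G.infDist A x := hxa

lemma isTerminalSet_graphOrbit_of_infDist_le (hconn : G.Connected) (hA : IsAutInvariant G A)
    (hAconn : (G.induce A).Connected) {x₀ : V} (hx₀ : x₀ ∉ A)
    (hmax : ∀ y, G.infDist A y ≤ G.infDist A x₀) :
    IsTerminalSet G (GraphOrbit G x₀) := by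
  have hAne : A.Nonempty := Set.nonempty_coe_sort.mp hAconn.nonempty
  have hpos : 0 < G.infDist A x₀ :=
    Nat.pos_of_ne_zero (mt (infDist_eq_zero_iff hconn hAne).mp hx₀)
  refine isTerminalSet_of_forall_exists_walk fun u hu v hv => ?_
  obtain ⟨b, hb, wu, hwu⟩ := exists_walk_to_set_infDist_lt hconn hAne u
  obtain ⟨a, ha, wv, hwv⟩ := exists_walk_to_set_infDist_lt hconn hAne v
  obtain ⟨wA, hwA⟩ := hAconn.exists_walk_support_subset hb ha
  refine ⟨wu.append (wA.append wv.reverse), fun z hz hzO => ?_⟩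
  have hdz := hA.infDist_eq_of_mem_graphOrbit hzO
  have hdv := hA.infDist_eq_of_mem_graphOrbit hv
  simp only [Walk.mem_support_append_iff, Walk.support_reverse, List.mem_reverse] at hz
  rcases hz with hz | hz | hz
  · have hzu : z ≠ u := by rintro rfl; exact hu hzO
    have := hwu z hz hzu
    have := hmax u
    omega
  · have := (infDist_eq_zero_iff hconn hAne).mpr (hwA z hz)
    omega
  · by_contra hzv
    have := hwv z hz hzv
    omega

theorem exists_isOrbit_isTerminalSet [Finite V] (hconn : G.Connected) (hA : IsAutInvariant G A)
    (hAconn : (G.induce A).Connected) (hAc : ∃ x, x ∉ A) :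
    ∃ O : Set V, IsOrbit G O ∧ IsTerminalSet G O := by
  have : Nonempty V := hconn.nonempty
  have hAne : A.Nonempty := Set.nonempty_coe_sort.mp hAconn.nonempty
  obtain ⟨x₀, hmax⟩ := Finite.exists_max (G.infDist A)
  obtain ⟨x, hx⟩ := hAc
  have hx₀ : x₀ ∉ A := fun h => by
    have := hmax x
    rw [(infDist_eq_zero_iff hconn hAne).mpr h, Nat.le_zero, infDist_eq_zero_iff hconn hAne] at this
    exact hx this
  exact ⟨_, ⟨x₀, rfl⟩, isTerminalSet_graphOrbit_of_infDist_le hconn hA hAconn hx₀ hmax⟩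

end SimpleGraph

open SimpleGraph

theorem stmt5_general {V : Type*} [Fintype V] (G : SimpleGraph V) (hconn : G.Connected)
    (hnoterm : ¬ ∃ O : Set V, IsOrbit G O ∧ IsTerminalSet G O) :
    ∀ S : Set (Set V), (∀ O ∈ S, IsOrbit G O) → S.Nonempty →
      (∃ O : Set V, IsOrbit G O ∧ O ∉ S) →
      ¬ (G.induce (⋃₀ S)).Connected := by
  rintro S hS - ⟨_, ⟨w, rfl⟩, hwS⟩ hSconn
  refine hnoterm (exists_isOrbit_isTerminalSet hconn (isAutInvariant_sUnion_of_isOrbit hS) hSconn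
    ⟨w, ?_⟩)
  rintro ⟨O, hO, hwO⟩
  obtain ⟨t, rfl⟩ := hS O hO
  exact hwS (graphOrbit_eq_of_mem hwO ▸ hO)

theorem stmt5 {V : Type*} [Fintype V] (G : SimpleGraph V) (hconn : G.Connected)
    (hnt : ¬ IsVertexTransitive G)
    (hnoterm : ¬ ∃ O : Set V, IsOrbit G O ∧ IsTerminalSet G O) :
    ∀ S : Set (Set V), (∀ O ∈ S, IsOrbit G O) → S.Nonempty →
      (∃ O : Set V, IsOrbit G O ∧ O ∉ S) →
      ¬ (G.induce (⋃₀ S)).Connected :=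
  stmt5_general G hconn hnoterm
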